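/- Let 0 ≤ k ≤ m and let (ν; μ) be an m-standard composite partition with l(ν) = k and l(μ) + l(ν) = m. Let λ := (μ_1, …, μ_{m−k}, 1−ν_k, 1−ν_{k−1}, …, 1−ν_1), an integral dominant weight of size m. Then in F: s_λ · Σ_{i=0}^{m} e_i(x) · y^{m−i−k} = Σ_{(α,β)} e_m(x) · s_{α ∪_m β̄} · y^{a−b}, where the sum runs over all pairs of partitions (α, β) with μ_i − α_i ∈ {0,1} for all i ≥ 1 and ν_i − β_i ∈ {0,1} for all i ≥ 1 (so l(α) ≤ m−k and l(β) ≤ k), and a := |μ| − |α|, b := |ν| − |β|. -/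

import Mathlib

open scoped Classical

noncomputable section

/-- The field `F = ℚ(x_1, …, x_m, y)` of rational functions in `m+1` indeterminates. -/
abbrev F (m : ℕ) : Type := FractionRing (MvPolynomial (Option (Fin m)) ℚ)

/-- The variable `x_i` as an element of `F`. -/
def Xv (m : ℕ) (i : Fin m) : F m :=
  algebraMap (MvPolynomial (Option (Fin m)) ℚ) (F m) (MvPolynomial.X (some i))

/-- The variable `y` as an element of `F`. -/
def Yv (m : ℕ) : F m :=
  algebraMap (MvPolynomial (Option (Fin m)) ℚ) (F m) (MvPolynomial.X none)

/-- `a_α = ∑_{w ∈ S_m} ε(w) · w(x₁^{α₁} ⋯ x_m^{α_m})`, where `w` permutes the variables. -/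
def aAlt (m : ℕ) (α : Fin m → ℤ) : F m :=
  ∑ w : Equiv.Perm (Fin m), (Equiv.Perm.sign w : ℤ) • ∏ i, Xv m (w i) ^ α i

/-- `δ = (m-1, m-2, …, 1, 0)`. -/
def deltaW (m : ℕ) : Fin m → ℤ := fun i => (m : ℤ) - 1 - (i : ℕ)

/-- The Schur function `s_λ = a_{λ+δ} / a_δ` of an integral dominant weight. -/
def schurW (m : ℕ) (lam : Fin m → ℤ) : F m :=
  aAlt m (fun i => lam i + deltaW m i) / aAlt m (deltaW m)

/-- The elementary symmetric polynomial `e_i(x_1, …, x_m)` in `F`. -/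
def eX (m : ℕ) (i : ℕ) : F m :=
  ∑ s ∈ Finset.powersetCard i (Finset.univ : Finset (Fin m)), ∏ j ∈ s, Xv m j

/-- The complete homogeneous symmetric polynomial `h_r(x_1, …, x_m)` in `F`. -/
def hXF (m : ℕ) (r : ℕ) : F m :=
  ∑ d ∈ (Finset.univ : Finset (Fin m)).sym r, ((d : Multiset (Fin m)).map (Xv m)).prod

/-- `ḣ_r(x) = h_r(x_1⁻¹, …, x_m⁻¹)`. -/
def hdotXF (m : ℕ) (r : ℕ) : F m :=
  ∑ d ∈ (Finset.univ : Finset (Fin m)).sym r,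
    ((d : Multiset (Fin m)).map (fun j => (Xv m j)⁻¹)).prod

/-- `h_r(x)` for `r : ℤ`, with `h_r = 0` for `r < 0`. -/
def hXZ (m : ℕ) (r : ℤ) : F m := if 0 ≤ r then hXF m r.toNat else 0

/-- `ḣ_r(x)` for `r : ℤ`, with `ḣ_r = 0` for `r < 0`. -/
def hdotXZ (m : ℕ) (r : ℤ) : F m := if 0 ≤ r then hdotXF m r.toNat else 0

/-- The complete super-symmetric function `h_r(x/y) = ∑_{k=0}^r h_k(x) y^{r-k}` (`0` for `r < 0`). -/
def hSup (m : ℕ) (r : ℤ) : F m :=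
  if 0 ≤ r then ∑ k ∈ Finset.range (r.toNat + 1), hXF m k * Yv m ^ (r.toNat - k) else 0

/-- `ḣ_r(x/y) = ∑_{k=0}^r ḣ_k(x) y^{-(r-k)}` (`0` for `r < 0`). -/
def hdotSup (m : ℕ) (r : ℤ) : F m :=
  if 0 ≤ r then ∑ k ∈ Finset.range (r.toNat + 1), hdotXF m k * (Yv m)⁻¹ ^ (r.toNat - k) else 0

/-- The super-symmetric function `s_{(ν;μ)}(x/y)` of a composite partition `(ν; μ)` with
`q = l(ν)`, `p = l(μ)`, given as the `(q+p) × (q+p)` block determinant (0-based indices). -/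
def sSup (m : ℕ) (ν μ : ℕ → ℕ) (q p : ℕ) : F m :=
  Matrix.det (Matrix.of fun r c : Fin (q + p) =>
    if (c : ℕ) < q then hdotSup m ((ν (q - 1 - (c : ℕ)) : ℤ) + (c : ℕ) - (r : ℕ))
    else hSup m ((μ ((c : ℕ) - q) : ℤ) + (r : ℕ) - (c : ℕ)))

/-- `s^{det}_{(ν;μ)}(x)`: the same block determinant built from `h_s(x)` and `ḣ_s(x)`. -/
def sDet (m : ℕ) (ν μ : ℕ → ℕ) (q p : ℕ) : F m :=
  Matrix.det (Matrix.of fun r c : Fin (q + p) =>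
    if (c : ℕ) < q then hdotXZ m ((ν (q - 1 - (c : ℕ)) : ℤ) + (c : ℕ) - (r : ℕ))
    else hXZ m ((μ ((c : ℕ) - q) : ℤ) + (r : ℕ) - (c : ℕ)))

/-- An integral dominant weight of size `m`: `λ_1 ≥ λ_2 ≥ ⋯ ≥ λ_m`. -/
def IsDom (m : ℕ) (lam : Fin m → ℤ) : Prop := ∀ i j : Fin m, i ≤ j → lam j ≤ lam i

/-- `f` is (the part function of) a partition with exactly `q` (positive) parts,
0-based indexing: the parts are `f 0 ≥ f 1 ≥ ⋯`. -/
def IsPartitionOfLen (f : ℕ → ℕ) (q : ℕ) : Prop :=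
  (∀ i j : ℕ, i ≤ j → f j ≤ f i) ∧ (∀ i : ℕ, 0 < f i ↔ i < q)

end

/-- The integral dominant weight `α ∪_m β̄ = (α_1, …, α_{l(α)}, 0, …, 0, -β_{l(β)}, …, -β_1)`
attached to an `m`-standard composite partition `(β; α)` (0-based indices): its `i`-th
entry is `α_i - β_{m-1-i}`. -/
def cupW (m : ℕ) (α β : ℕ → ℕ) : Fin m → ℤ := fun i =>
  (α (i : ℕ) : ℤ) - (β (m - 1 - (i : ℕ)) : ℤ)

/-- The integral dominant weight `λ = (μ_1, …, μ_{m-k}, 1-ν_k, …, 1-ν_1)` attached to an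
`m`-standard composite partition `(ν; μ)` with `l(ν) = k`, `l(μ) ≤ m - k`
(0-based indices, `μ_i := 0` for `i > l(μ)`). -/
def lamOfPair (m k : ℕ) (ν μ : ℕ → ℕ) : Fin m → ℤ := fun j =>
  if (j : ℕ) < m - k then (μ (j : ℕ) : ℤ) else 1 - (ν (m - 1 - (j : ℕ)) : ℤ)

/-! Multiplying `a_{λ+δ}` by `∑ e_i(x) y^{m-i} = ∏ (x_j + y)` raises by one the exponents indexed
by a subset `S`, giving `∑_S a_{λ+χ_S+δ} y^{m-|S|}`. As `λ` is dominant and `χ_S` is a 0/1 vector,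
`a_{λ+χ_S+δ}` vanishes unless `λ + χ_S` is dominant. Writing `λ + χ_S = α ∪_m β̄ + (1, …, 1)`
matches the subsets `S` bijectively with the pairs `(α, β)` satisfying the strip conditions; the
shift by `(1, …, 1)` is the factor `e_m(x)`, dominance of `α ∪_m β̄` says that `α` and `β` are
partitions, and `m - k - |S| = (|μ| - |α|) - (|ν| - |β|)`. -/

open Finset

theorem prod_zpow_mul_prod_add {K ι : Type*} [Field K] [Fintype ι] [DecidableEq ι]
    {x : ι → K} (hx : ∀ i, x i ≠ 0) (γ : ι → ℤ) (c : K) :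
    (∏ i, x i ^ γ i) * ∏ i, (x i + c) =
      ∑ S : Finset ι, (∏ i, x i ^ (γ i + if i ∈ S then 1 else 0)) * c ^ (Fintype.card ι - #S) := by
  have hsplit : ∀ i, x i ^ γ i * (x i + c) = x i ^ (γ i + 1) + c * x i ^ γ i := fun i => by
    rw [zpow_add_one₀ (hx i)]; ring
  rw [← prod_mul_distrib, prod_congr rfl fun i _ => hsplit i, prod_add, powerset_univ]
  refine sum_congr rfl fun S _ => ?_
  have hχ : ∏ i, x i ^ (γ i + if i ∈ S then 1 else 0) =
      (∏ i ∈ S, x i ^ (γ i + 1)) * ∏ i ∈ univ \ S, x i ^ γ i := by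
    rw [← prod_sdiff (subset_univ S), mul_comm]
    congr 1
    · exact prod_congr rfl fun i hi => by rw [if_pos hi]
    · exact prod_congr rfl fun i hi => by rw [if_neg (mem_sdiff.1 hi).2, add_zero]
  rw [prod_mul_distrib, prod_const, card_univ_sdiff, hχ]
  ring

theorem finsum_eq_sum_range {M : Type*} [AddCommMonoid M] {f : ℕ → M} {p : ℕ}
    (hf : ∀ i, p ≤ i → f i = 0) :
    ∑ᶠ i, f i = ∑ i ∈ range p, f i :=
  finsum_eq_sum_of_support_subset f fun i hi => by
    simpa using not_le.1 fun h => hi (hf i h)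

section Alternant

variable {m : ℕ}

theorem Xv_ne_zero (i : Fin m) : Xv m i ≠ 0 :=
  (map_ne_zero_iff _ (IsFractionRing.injective _ _)).2 (MvPolynomial.X_ne_zero _)

theorem Yv_ne_zero : Yv m ≠ 0 :=
  (map_ne_zero_iff _ (IsFractionRing.injective _ _)).2 (MvPolynomial.X_ne_zero _)

theorem aAlt_eq_det (α : Fin m → ℤ) : aAlt m α = (Matrix.of fun i j => Xv m i ^ α j).det := by
  simp [aAlt, Matrix.det_apply, Units.smul_def]

theorem aAlt_eq_zero_of_apply_eq {α : Fin m → ℤ} {i j : Fin m} (hij : i ≠ j) (h : α i = α j) :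
    aAlt m α = 0 := by
  rw [aAlt_eq_det]
  exact Matrix.det_zero_of_column_eq hij fun t => by simp [h]

theorem eX_self : eX m m = ∏ j, Xv m j := by
  have h : powersetCard m (univ : Finset (Fin m)) = {univ} := by
    simpa using powersetCard_self (univ : Finset (Fin m))
  rw [eX, h, sum_singleton]

theorem eX_self_mul_aAlt (α : Fin m → ℤ) : eX m m * aAlt m α = aAlt m (fun i => α i + 1) := by
  rw [aAlt_eq_det, aAlt_eq_det, eX_self, ← Matrix.det_mul_column]
  congr 1
  ext i j
  simp [zpow_add_one₀ (Xv_ne_zero i), mul_comm]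

theorem aAlt_mul_prod_add (γ : Fin m → ℤ) (c : F m) :
    aAlt m γ * ∏ j, (Xv m j + c) =
      ∑ S : Finset (Fin m), aAlt m (fun i => γ i + if i ∈ S then 1 else 0) * c ^ (m - #S) := by
  simp only [aAlt, zsmul_eq_mul, sum_mul, mul_assoc]
  rw [sum_comm]
  refine sum_congr rfl fun w _ => ?_
  rw [← Equiv.prod_comp w (fun j => Xv m j + c),
    prod_zpow_mul_prod_add (fun i => Xv_ne_zero (w i)), mul_sum, Fintype.card_fin]

theorem sum_eX_mul_pow (c : F m) :
    ∑ i ∈ range (m + 1), eX m i * c ^ (m - i) = ∏ j, (Xv m j + c) := by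
  rw [prod_add, sum_powerset, card_univ, Fintype.card_fin]
  refine sum_congr rfl fun i _ => ?_
  rw [eX, sum_mul]
  refine sum_congr rfl fun S hS => ?_
  rw [mem_powersetCard] at hS
  rw [prod_const, card_univ_sdiff, Fintype.card_fin, hS.2]

theorem schurW_mul_sum_eX_mul_zpow (γ : Fin m → ℤ) (k : ℕ) :
    schurW m γ * ∑ i ∈ range (m + 1), eX m i * Yv m ^ ((m : ℤ) - i - k) =
      ∑ S : Finset (Fin m), aAlt m (fun i => γ i + deltaW m i + if i ∈ S then 1 else 0) /
        aAlt m (deltaW m) * Yv m ^ ((m : ℤ) - k - #S) := by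
  have hY : ∀ n ≤ m, Yv m ^ (m - n) * Yv m ^ (-(k : ℤ)) = Yv m ^ ((m : ℤ) - k - n) := by
    intro n hn
    rw [← zpow_natCast, ← zpow_add₀ Yv_ne_zero]
    congr 1
    omega
  have hsum : ∑ i ∈ range (m + 1), eX m i * Yv m ^ ((m : ℤ) - i - k) =
      (∏ j, (Xv m j + Yv m)) * Yv m ^ (-(k : ℤ)) := by
    rw [← sum_eX_mul_pow, sum_mul]
    exact sum_congr rfl fun i hi => by
      rw [sub_right_comm, ← hY i (Nat.lt_succ_iff.1 (mem_range.1 hi)), mul_assoc]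
  rw [hsum, schurW, div_mul_eq_mul_div, ← mul_assoc, aAlt_mul_prod_add, sum_mul, sum_div]
  refine sum_congr rfl fun S _ => ?_
  have hS : #S ≤ m := by simpa using card_le_univ S
  rw [← hY _ hS]
  ring

theorem exists_lt_succ_of_not_isDom {f : Fin m → ℤ} (h : ¬ IsDom m f) :
    ∃ i j : Fin m, (j : ℕ) = i + 1 ∧ f i < f j := by
  cases m with
  | zero => exact absurd (fun i => i.elim0) h
  | succ n =>
    have hf : ¬ Antitone f := fun hf => h fun _ _ hij => hf hij
    rw [Fin.antitone_iff_succ_le] at hf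
    simp only [not_forall, not_le] at hf
    obtain ⟨i, hi⟩ := hf
    exact ⟨i.castSucc, i.succ, by simp, hi⟩

/-- An ascent of `ρ` at adjacent positions makes `ρ + δ` repeat a value there, because `ρ`
exceeds the dominant weight `γ` by at most one. -/
theorem isDom_of_aAlt_ne_zero {γ ρ : Fin m → ℤ} (hγ : IsDom m γ)
    (hρ : ∀ i, ρ i = γ i ∨ ρ i = γ i + 1) (h : aAlt m (fun i => ρ i + deltaW m i) ≠ 0) :
    IsDom m ρ := by
  by_contra hρd
  obtain ⟨i, j, hij, hlt⟩ := exists_lt_succ_of_not_isDom hρd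
  refine h (aAlt_eq_zero_of_apply_eq (i := i) (j := j) (Fin.ne_of_val_ne (by omega)) ?_)
  have hγij := hγ i j (Fin.le_def.2 (by omega))
  have hδ : deltaW m i = deltaW m j + 1 := by simp only [deltaW]; omega
  rcases hρ i with hi | hi <;> rcases hρ j with hj | hj <;> omega

end Alternant

theorem IsPartitionOfLen.pos {f : ℕ → ℕ} {q i : ℕ} (h : IsPartitionOfLen f q) (hi : i < q) :
    0 < f i :=
  (h.2 i).2 hi

theorem IsPartitionOfLen.eq_zero {f : ℕ → ℕ} {q i : ℕ} (h : IsPartitionOfLen f q) (hi : q ≤ i) :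
    f i = 0 :=
  Nat.eq_zero_of_not_pos fun hpos => absurd ((h.2 i).1 hpos) (not_lt.2 hi)

theorem exists_isPartitionOfLen {f : ℕ → ℕ} (hf : Antitone f) {N : ℕ} (hN : f N = 0) :
    ∃ q, IsPartitionOfLen f q := by
  have hex : ∃ n, f n = 0 := ⟨N, hN⟩
  refine ⟨Nat.find hex, fun i j hij => hf hij, fun i => ⟨fun hpos => ?_, fun hi => ?_⟩⟩
  · by_contra hi
    have := hf (not_lt.1 hi)
    rw [Nat.find_spec hex] at this
    omega
  · exact Nat.pos_of_ne_zero (Nat.find_min hex hi)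

def IsVerticalStrip (μ α : ℕ → ℕ) : Prop := ∀ i, α i = μ i ∨ α i + 1 = μ i

theorem IsVerticalStrip.eq_zero_of_le {μ α : ℕ → ℕ} {p : ℕ} (h : IsVerticalStrip μ α)
    (hμ : IsPartitionOfLen μ p) (i : ℕ) (hi : p ≤ i) : α i = 0 := by
  have := hμ.eq_zero hi
  rcases h i with h | h <;> omega

section Cup

variable {m : ℕ} {α β α' β' : ℕ → ℕ} {p q : ℕ}

theorem cupW_of_lt (hβ : ∀ j, q ≤ j → β j = 0) (hpq : p + q = m) {i : Fin m}
    (hi : (i : ℕ) < p) : cupW m α β i = α i := by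
  rw [cupW, hβ _ (by omega), Nat.cast_zero, sub_zero]

theorem cupW_of_le (hα : ∀ i, p ≤ i → α i = 0) {i : Fin m} (hi : p ≤ (i : ℕ)) :
    cupW m α β i = -β (m - 1 - i) := by
  rw [cupW, hα _ hi, Nat.cast_zero, zero_sub]

theorem cupW_rev (hα : ∀ i, p ≤ i → α i = 0) (hpq : p + q = m) {j : ℕ} (hj : j < q) :
    cupW m α β ⟨m - 1 - j, by omega⟩ = -β j := by
  rw [cupW_of_le hα (i := ⟨m - 1 - j, _⟩) (by dsimp only; omega), Fin.val_mk,
    show m - 1 - (m - 1 - j) = j by omega]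

theorem eq_of_cupW_eq (hpq : p + q = m) (hα : ∀ i, p ≤ i → α i = 0) (hα' : ∀ i, p ≤ i → α' i = 0)
    (hβ : ∀ j, q ≤ j → β j = 0) (hβ' : ∀ j, q ≤ j → β' j = 0)
    (h : cupW m α β = cupW m α' β') : α = α' ∧ β = β' := by
  refine ⟨funext fun i => ?_, funext fun j => ?_⟩
  · rcases lt_or_ge i p with hi | hi
    · have := congrFun h ⟨i, by omega⟩
      rwa [cupW_of_lt hβ hpq hi, cupW_of_lt hβ' hpq hi, Nat.cast_inj] at this
    · rw [hα i hi, hα' i hi]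
  · rcases lt_or_ge j q with hj | hj
    · have := congrFun h ⟨m - 1 - j, by omega⟩
      rwa [cupW_rev hα hpq hj, cupW_rev hα' hpq hj, neg_inj, Nat.cast_inj] at this
    · rw [hβ j hj, hβ' j hj]

theorem antitone_of_isDom_cupW (hpq : p + q = m) (hα : ∀ i, p ≤ i → α i = 0)
    (hβ : ∀ j, q ≤ j → β j = 0) (h : IsDom m (cupW m α β)) : Antitone α ∧ Antitone β := by
  refine ⟨fun i j hij => ?_, fun i j hij => ?_⟩
  · rcases lt_or_ge j p with hj | hj
    · have := h ⟨i, by omega⟩ ⟨j, by omega⟩ (Fin.mk_le_mk.2 hij)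
      rwa [cupW_of_lt hβ hpq (i := ⟨i, _⟩) (lt_of_le_of_lt hij hj), cupW_of_lt hβ hpq hj,
        Nat.cast_le] at this
    · rw [hα j hj]
      exact Nat.zero_le _
  · rcases lt_or_ge j q with hj | hj
    · have := h ⟨m - 1 - j, by omega⟩ ⟨m - 1 - i, by omega⟩ (Fin.mk_le_mk.2 (by omega))
      rwa [cupW_rev hα hpq (lt_of_le_of_lt hij hj), cupW_rev hα hpq hj, neg_le_neg_iff,
        Nat.cast_le] at this
    · rw [hβ j hj]
      exact Nat.zero_le _

end Cup

section Weights

variable {m k : ℕ} {ν μ α β : ℕ → ℕ}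

theorem isDom_lamOfPair (hν : IsPartitionOfLen ν k) (hμ : IsPartitionOfLen μ (m - k)) :
    IsDom m (lamOfPair m k ν μ) := by
  intro i j hij
  have hij' : (i : ℕ) ≤ j := hij
  simp only [lamOfPair]
  split_ifs with hj hi hi
  · exact_mod_cast hμ.1 _ _ hij'
  · omega
  · have := hμ.pos hi
    omega
  · have := hν.1 (m - 1 - j) (m - 1 - i) (by omega)
    omega

theorem cupW_add_one_sub_lamOfPair (hk : k ≤ m) (hα : ∀ i, m - k ≤ i → α i = 0)
    (hβ : ∀ j, k ≤ j → β j = 0) (i : Fin m) :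
    cupW m α β i + 1 - lamOfPair m k ν μ i =
      if (i : ℕ) < m - k then (α i : ℤ) + 1 - μ i else (ν (m - 1 - i) : ℤ) - β (m - 1 - i) := by
  simp only [lamOfPair]
  split_ifs with hi
  · rw [cupW_of_lt hβ (Nat.sub_add_cancel hk) hi]
  · rw [cupW_of_le hα (not_lt.1 hi)]
    ring

theorem cupW_add_one_eq_lamOfPair_or (hk : k ≤ m) (hν : IsPartitionOfLen ν k)
    (hμ : IsPartitionOfLen μ (m - k)) (hα : IsVerticalStrip μ α) (hβ : IsVerticalStrip ν β)
    (i : Fin m) :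
    cupW m α β i + 1 = lamOfPair m k ν μ i ∨ cupW m α β i + 1 = lamOfPair m k ν μ i + 1 := by
  have h := cupW_add_one_sub_lamOfPair (ν := ν) (μ := μ) hk (hα.eq_zero_of_le hμ)
    (hβ.eq_zero_of_le hν) i
  split_ifs at h
  · rcases hα i with h' | h' <;> omega
  · rcases hβ (m - 1 - i) with h' | h' <;> omega

def subsetInd (S : Finset (Fin m)) (n : ℕ) : ℕ := if n ∈ S.map Fin.valEmbedding then 1 else 0

theorem subsetInd_val (S : Finset (Fin m)) (i : Fin m) :
    subsetInd S i = if i ∈ S then 1 else 0 := by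
  simp [subsetInd, Fin.val_inj]

theorem subsetInd_le_one (S : Finset (Fin m)) (n : ℕ) : subsetInd S n ≤ 1 := by
  unfold subsetInd
  split_ifs <;> omega

theorem sum_range_subsetInd (S : Finset (Fin m)) : ∑ n ∈ range m, (subsetInd S n : ℤ) = #S := by
  have hS : S.map Fin.valEmbedding ⊆ range m := fun n hn => by
    obtain ⟨i, -, rfl⟩ := mem_map.1 hn
    exact mem_range.2 i.isLt
  simp only [subsetInd, Nat.cast_ite, Nat.cast_one, Nat.cast_zero, sum_boole, filter_mem_eq_inter,
    inter_eq_right.2 hS, card_map]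

/-- Truncated subtraction keeps the rows beyond `l(μ)` and `l(ν)` at `0`. -/
def pairOfSubset (ν μ : ℕ → ℕ) (S : Finset (Fin m)) : (ℕ → ℕ) × (ℕ → ℕ) :=
  (fun i => μ i + subsetInd S i - 1, fun j => ν j - subsetInd S (m - 1 - j))

theorem isVerticalStrip_pairOfSubset_fst (S : Finset (Fin m)) :
    IsVerticalStrip μ (pairOfSubset ν μ S).1 := fun i => by
  have := subsetInd_le_one S i
  simp only [pairOfSubset]
  omega

theorem isVerticalStrip_pairOfSubset_snd (S : Finset (Fin m)) :
    IsVerticalStrip ν (pairOfSubset ν μ S).2 := fun j => by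
  have := subsetInd_le_one S (m - 1 - j)
  simp only [pairOfSubset]
  omega

theorem cupW_pairOfSubset (hk : k ≤ m) (hν : IsPartitionOfLen ν k)
    (hμ : IsPartitionOfLen μ (m - k)) (S : Finset (Fin m)) (i : Fin m) :
    cupW m (pairOfSubset ν μ S).1 (pairOfSubset ν μ S).2 i + 1 =
      lamOfPair m k ν μ i + if i ∈ S then 1 else 0 := by
  have key : cupW m (pairOfSubset ν μ S).1 (pairOfSubset ν μ S).2 i + 1 - lamOfPair m k ν μ i =
      subsetInd S i := by
    rw [cupW_add_one_sub_lamOfPair hk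
      ((isVerticalStrip_pairOfSubset_fst (ν := ν) S).eq_zero_of_le hμ)
      ((isVerticalStrip_pairOfSubset_snd (μ := μ) S).eq_zero_of_le hν)]
    simp only [pairOfSubset]
    split_ifs with hi
    · have := hμ.pos hi
      omega
    · have := hν.pos (show m - 1 - i < k by omega)
      have := subsetInd_le_one S i
      rw [show m - 1 - (m - 1 - (i : ℕ)) = i by omega]
      omega
  rw [subsetInd_val] at key
  split_ifs at key ⊢ <;> push_cast at key <;> linarith

theorem pairOfSubset_injective (hk : k ≤ m) (hν : IsPartitionOfLen ν k)
    (hμ : IsPartitionOfLen μ (m - k)) : Function.Injective (pairOfSubset (m := m) ν μ) := by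
  intro S S' h
  ext i
  have := cupW_pairOfSubset hk hν hμ S i
  rw [h, cupW_pairOfSubset hk hν hμ S' i, add_right_inj] at this
  split_ifs at this <;> simp_all

theorem exists_pairOfSubset_eq (hk : k ≤ m) (hν : IsPartitionOfLen ν k)
    (hμ : IsPartitionOfLen μ (m - k)) {α β : ℕ → ℕ} (hα : IsVerticalStrip μ α)
    (hβ : IsVerticalStrip ν β) : ∃ S : Finset (Fin m), pairOfSubset ν μ S = (α, β) := by
  set S : Finset (Fin m) := univ.filter fun i => lamOfPair m k ν μ i ≤ cupW m α β i
  refine ⟨S, ?_⟩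
  have hcup : cupW m (pairOfSubset ν μ S).1 (pairOfSubset ν μ S).2 = cupW m α β := by
    funext i
    have h := cupW_pairOfSubset hk hν hμ S i
    have hmem : i ∈ S ↔ lamOfPair m k ν μ i ≤ cupW m α β i := by simp [S]
    rcases cupW_add_one_eq_lamOfPair_or hk hν hμ hα hβ i with h' | h' <;>
      split_ifs at h with hi <;> rw [hmem] at hi <;> omega
  obtain ⟨h1, h2⟩ := eq_of_cupW_eq (Nat.sub_add_cancel hk)
    ((isVerticalStrip_pairOfSubset_fst (ν := ν) S).eq_zero_of_le hμ) (hα.eq_zero_of_le hμ)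
    ((isVerticalStrip_pairOfSubset_snd (μ := μ) S).eq_zero_of_le hν) (hβ.eq_zero_of_le hν) hcup
  exact Prod.ext h1 h2

theorem finsum_eq_sum_pairOfSubset {M : Type*} [AddCommMonoid M] (hk : k ≤ m)
    (hν : IsPartitionOfLen ν k) (hμ : IsPartitionOfLen μ (m - k))
    (φ : (ℕ → ℕ) × (ℕ → ℕ) → M)
    (hφ : ∀ αβ, φ αβ ≠ 0 → IsVerticalStrip μ αβ.1 ∧ IsVerticalStrip ν αβ.2) :
    ∑ᶠ αβ, φ αβ = ∑ S : Finset (Fin m), φ (pairOfSubset ν μ S) := by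
  have hsupp : Function.support φ ⊆ Set.range (pairOfSubset (m := m) ν μ) := fun αβ h =>
    exists_pairOfSubset_eq hk hν hμ (hφ αβ h).1 (hφ αβ h).2
  rw [finsum_eq_sum_of_support_subset φ (s := univ.image (pairOfSubset ν μ))
      (by rwa [coe_image, coe_univ, Set.image_univ]),
    sum_image fun _ _ _ _ h => pairOfSubset_injective hk hν hμ h]

theorem finsum_sub_fst_pairOfSubset (hμ : IsPartitionOfLen μ (m - k)) (S : Finset (Fin m)) :
    ∑ᶠ i, ((μ i : ℤ) - (pairOfSubset ν μ S).1 i) =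
      ∑ i ∈ range (m - k), (1 - (subsetInd S i : ℤ)) := by
  rw [finsum_eq_sum_range (p := m - k) fun i hi => by
    rw [hμ.eq_zero hi, (isVerticalStrip_pairOfSubset_fst (ν := ν) S).eq_zero_of_le hμ i hi]; rfl]
  refine sum_congr rfl fun i hi => ?_
  have := hμ.pos (mem_range.1 hi)
  have := subsetInd_le_one S i
  simp only [pairOfSubset]
  omega

theorem finsum_sub_snd_pairOfSubset (hk : k ≤ m) (hν : IsPartitionOfLen ν k)
    (S : Finset (Fin m)) :
    ∑ᶠ j, ((ν j : ℤ) - (pairOfSubset ν μ S).2 j) = ∑ i ∈ Ico (m - k) m, (subsetInd S i : ℤ) := by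
  rw [finsum_eq_sum_range (p := k) fun j hj => by
    rw [hν.eq_zero hj, (isVerticalStrip_pairOfSubset_snd (μ := μ) S).eq_zero_of_le hν j hj]; rfl]
  have hterm : ∀ j ∈ range k, (ν j : ℤ) - (pairOfSubset ν μ S).2 j = subsetInd S (m - 1 - j) :=
    fun j hj => by
      have := hν.pos (mem_range.1 hj)
      have := subsetInd_le_one S (m - 1 - j)
      simp only [pairOfSubset]
      omega
  rw [sum_congr rfl hterm]
  refine sum_nbij' (fun j => m - 1 - j) (fun i => m - 1 - i) ?_ ?_ ?_ ?_ fun _ _ => rfl <;>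
    intro a ha <;> simp only [mem_range, mem_Ico] at ha ⊢ <;> omega

theorem finsum_sub_pairOfSubset (hk : k ≤ m) (hν : IsPartitionOfLen ν k)
    (hμ : IsPartitionOfLen μ (m - k)) (S : Finset (Fin m)) :
    (∑ᶠ i, ((μ i : ℤ) - (pairOfSubset ν μ S).1 i)) - ∑ᶠ i, ((ν i : ℤ) - (pairOfSubset ν μ S).2 i) =
      (m : ℤ) - k - #S := by
  rw [finsum_sub_fst_pairOfSubset hμ, finsum_sub_snd_pairOfSubset hk hν, sum_sub_distrib,
    ← sum_range_subsetInd S, ← sum_range_add_sum_Ico _ (Nat.sub_le m k)]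
  simp only [sum_const, card_range, Int.nsmul_eq_mul, Nat.cast_sub hk, mul_one]
  ring

theorem aAlt_lamOfPair_add_eq (hk : k ≤ m) (hν : IsPartitionOfLen ν k)
    (hμ : IsPartitionOfLen μ (m - k)) (S : Finset (Fin m)) :
    aAlt m (fun i => lamOfPair m k ν μ i + deltaW m i + if i ∈ S then 1 else 0) =
      eX m m * aAlt m (fun i => cupW m (pairOfSubset ν μ S).1 (pairOfSubset ν μ S).2 i +
        deltaW m i) := by
  rw [eX_self_mul_aAlt]
  congr 1
  funext i
  linarith [cupW_pairOfSubset hk hν hμ S i]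

theorem aAlt_cupW_pairOfSubset_eq_zero (hk : k ≤ m) (hν : IsPartitionOfLen ν k)
    (hμ : IsPartitionOfLen μ (m - k)) (S : Finset (Fin m))
    (h : ¬ ((∃ la, IsPartitionOfLen (pairOfSubset ν μ S).1 la) ∧
      ∃ lb, IsPartitionOfLen (pairOfSubset ν μ S).2 lb)) :
    aAlt m (fun i => cupW m (pairOfSubset ν μ S).1 (pairOfSubset ν μ S).2 i + deltaW m i) = 0 := by
  by_contra hne
  have hγ : IsDom m (fun i => lamOfPair m k ν μ i - 1) := fun i j hij => by
    linarith [isDom_lamOfPair hν hμ i j hij]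
  have hdom := isDom_of_aAlt_ne_zero hγ (fun i => by
    have := cupW_pairOfSubset hk hν hμ S i
    split_ifs at this <;> omega) hne
  have hα := (isVerticalStrip_pairOfSubset_fst (ν := ν) S).eq_zero_of_le hμ
  have hβ := (isVerticalStrip_pairOfSubset_snd (μ := μ) S).eq_zero_of_le hν
  obtain ⟨hαa, hβa⟩ := antitone_of_isDom_cupW (Nat.sub_add_cancel hk) hα hβ hdom
  exact h ⟨exists_isPartitionOfLen hαa (hα _ le_rfl), exists_isPartitionOfLen hβa (hβ _ le_rfl)⟩

end Weights

theorem typical_case_identity_general (m k : ℕ) (hk : k ≤ m) (ν μ : ℕ → ℕ)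
    (hν : IsPartitionOfLen ν k) (hμ : IsPartitionOfLen μ (m - k)) :
    schurW m (lamOfPair m k ν μ) *
      (∑ i ∈ Finset.range (m + 1), eX m i * Yv m ^ ((m : ℤ) - i - k)) =
    ∑ᶠ αβ : (ℕ → ℕ) × (ℕ → ℕ),
      if (∃ la, IsPartitionOfLen αβ.1 la) ∧ (∃ lb, IsPartitionOfLen αβ.2 lb) ∧
          (∀ i, αβ.1 i = μ i ∨ αβ.1 i + 1 = μ i) ∧ (∀ i, αβ.2 i = ν i ∨ αβ.2 i + 1 = ν i)
      then eX m m * schurW m (cupW m αβ.1 αβ.2) *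
        Yv m ^ ((∑ᶠ i : ℕ, ((μ i : ℤ) - αβ.1 i)) - ∑ᶠ i : ℕ, ((ν i : ℤ) - αβ.2 i))
      else 0 := by
  rw [schurW_mul_sum_eX_mul_zpow, finsum_eq_sum_pairOfSubset hk hν hμ _
    fun αβ h => (ite_ne_right_iff.1 h).1.2.2]
  refine sum_congr rfl fun S _ => ?_
  rw [aAlt_lamOfPair_add_eq hk hν hμ, finsum_sub_pairOfSubset hk hν hμ]
  split_ifs with h
  · rw [schurW, mul_div_assoc]
  · rw [aAlt_cupW_pairOfSubset_eq_zero hk hν hμ S fun hab => h ⟨hab.1, hab.2,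
      isVerticalStrip_pairOfSubset_fst S, isVerticalStrip_pairOfSubset_snd S⟩]
    simp

/-- Equation (19) of the paper, the typical case identity. For an
`m`-standard composite partition `(ν; μ)` with `l(ν) = k`, `l(μ) = m - k`, and
`λ = (μ_1, …, μ_{m-k}, 1-ν_k, …, 1-ν_1)`:
`s_λ(x) ∑_{i=0}^m e_i(x) y^{m-i-k} = ∑_{(α,β)} e_m(x) s_{α ∪_m β̄}(x) y^{a-b}`,
the sum over pairs of partitions `(α, β)` with `μ_i - α_i ∈ {0,1}`, `ν_i - β_i ∈ {0,1}`,
where `a = |μ| - |α|`, `b = |ν| - |β|`. -/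
theorem typical_case_identity (m k : ℕ) (hm : 1 ≤ m) (hk : k ≤ m) (ν μ : ℕ → ℕ)
    (hν : IsPartitionOfLen ν k) (hμ : IsPartitionOfLen μ (m - k)) :
    schurW m (lamOfPair m k ν μ) *
      (∑ i ∈ Finset.range (m + 1), eX m i * Yv m ^ ((m : ℤ) - i - k)) =
    ∑ᶠ αβ : (ℕ → ℕ) × (ℕ → ℕ),
      if (∃ la, IsPartitionOfLen αβ.1 la) ∧ (∃ lb, IsPartitionOfLen αβ.2 lb) ∧
          (∀ i, αβ.1 i = μ i ∨ αβ.1 i + 1 = μ i) ∧ (∀ i, αβ.2 i = ν i ∨ αβ.2 i + 1 = ν i)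
      then eX m m * schurW m (cupW m αβ.1 αβ.2) *
        Yv m ^ ((∑ᶠ i : ℕ, ((μ i : ℤ) - αβ.1 i)) - ∑ᶠ i : ℕ, ((ν i : ℤ) - αβ.2 i))
      else 0 :=
  typical_case_identity_general m k hk ν μ hν hμ
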